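/- Let d̃ ∈ ℕ and let g : ℝ^{d̃} → ℝ be continuously differentiable with ‖∇g(x)‖ ≤ C₀‖x‖ for all x ∈ ℝ^{d̃} and some C₀ > 0. For h > 0 define c_h(x,v;x',v') := h · inf{ ∫₀^h ‖ξ̈(t) + ∇g(ξ(t))‖² dt : ξ ∈ C²([0,h]; ℝ^{d̃}), (ξ(0), ξ̇(0)) = (x,v), (ξ(h), ξ̇(h)) = (x',v') }. Then there exists C > 0, depending only on C₀, such that for all 0 < h ≤ 1 and all x, v, x', v' ∈ ℝ^{d̃}: c_h(x,v;x',v') ≤ C [ h²‖(3/h²)(x' − x − vh) − (v' − v)/h‖² + h⁴‖(v' + v)/h² − (2/h³)(x' − x)‖² + h²( ‖x‖² + h²‖v‖² + h⁴‖(3/h²)(x' − x − vh) − (v' − v)/h‖² + h⁶‖(v' + v)/h² − (2/h³)(x' − x)‖² ) ]. -/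

import Mathlib

open MeasureTheory Filter
open scoped ENNReal NNReal RealInnerProductSpace Topology Classical

noncomputable section

/-- `ℝ^d` with the Euclidean norm. -/
abbrev Euc (d : ℕ) : Type := EuclideanSpace ℝ (Fin d)

/-- the variational (mean squared acceleration) cost for the Kramers equation:
`c_h(x,v;x',v') = h inf { ∫₀^h ‖ξ̈(t) + ∇g(ξ(t))‖² dt }` over `C²` curves joining `(x,v)`
to `(x',v')` in position and velocity. -/
def cKram {dt : ℕ} (g : Euc dt → ℝ) (h : ℝ)
    (q : (Euc dt × Euc dt) × (Euc dt × Euc dt)) : ℝ :=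
  h * sInf { r : ℝ | ∃ ξ : ℝ → Euc dt, ContDiff ℝ 2 ξ ∧
    ξ 0 = q.1.1 ∧ deriv ξ 0 = q.1.2 ∧ ξ h = q.2.1 ∧ deriv ξ h = q.2.2 ∧
    r = ∫ t in (0:ℝ)..h, ‖deriv (deriv ξ) t + gradient g (ξ t)‖ ^ 2 }

/-!
Test the infimum with the cubic Hermite interpolant `ξ̄(t) = x + t v + t² a + t³ b`, where `a`, `b`
are the two coefficients appearing on the right-hand side. Its acceleration is `2a + 6t b`, and the
growth bound gives `‖∇g(ξ̄ t)‖ ≤ C₀ (‖x‖ + t‖v‖ + t²‖a‖ + t³‖b‖)`. So on `[0, h]` the integrand is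
at most `B = 12‖a‖² + 108h²‖b‖² + 12C₀²(‖x‖² + h²‖v‖² + h⁴‖a‖² + h⁶‖b‖²)`, whence
`c_h ≤ h² B ≤ (108 + 12C₀²) · (right-hand side)`.
-/

lemma add_sq_le_three_mul (α β γ : ℝ) : (α + β + γ) ^ 2 ≤ 3 * (α ^ 2 + β ^ 2 + γ ^ 2) := by
  nlinarith [sq_nonneg (α - β), sq_nonneg (β - γ), sq_nonneg (α - γ)]

lemma add_sq_le_four_mul (α β γ δ : ℝ) :
    (α + β + γ + δ) ^ 2 ≤ 4 * (α ^ 2 + β ^ 2 + γ ^ 2 + δ ^ 2) := by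
  nlinarith [sq_nonneg (α - β), sq_nonneg (α - γ), sq_nonneg (α - δ), sq_nonneg (β - γ),
    sq_nonneg (β - δ), sq_nonneg (γ - δ)]

section Cubic

variable {E : Type*} [NormedAddCommGroup E] [NormedSpace ℝ E]

def cubicCurve (x v a b : E) (t : ℝ) : E := x + t • v + t ^ 2 • a + t ^ 3 • b

def hermiteCoeff₂ (h : ℝ) (x v x' v' : E) : E :=
  (3 / h ^ 2) • (x' - x - h • v) - (1 / h) • (v' - v)

def hermiteCoeff₃ (h : ℝ) (x v x' v' : E) : E :=
  (1 / h ^ 2) • (v' + v) - (2 / h ^ 3) • (x' - x)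

variable (x v a b : E)

lemma contDiff_cubicCurve {n : WithTop ℕ∞} : ContDiff ℝ n (cubicCurve x v a b) := by
  unfold cubicCurve
  fun_prop

@[simp]
lemma cubicCurve_zero : cubicCurve x v a b 0 = x := by
  simp [cubicCurve]

lemma hasDerivAt_cubicCurve (t : ℝ) :
    HasDerivAt (cubicCurve x v a b) (v + (2 * t) • a + (3 * t ^ 2) • b) t := by
  have := (((hasDerivAt_const t x).add ((hasDerivAt_id t).smul_const v)).add
    ((hasDerivAt_pow 2 t).smul_const a)).add ((hasDerivAt_pow 3 t).smul_const b)
  exact this.congr_deriv (by simp)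

lemma deriv_cubicCurve :
    deriv (cubicCurve x v a b) = fun t => v + (2 * t) • a + (3 * t ^ 2) • b :=
  funext fun t => (hasDerivAt_cubicCurve x v a b t).deriv

@[simp]
lemma deriv_cubicCurve_zero : deriv (cubicCurve x v a b) 0 = v := by
  simp [deriv_cubicCurve]

lemma deriv_deriv_cubicCurve (t : ℝ) :
    deriv (deriv (cubicCurve x v a b)) t = (2 : ℝ) • a + (6 * t) • b := by
  have := ((hasDerivAt_const t v).add (((hasDerivAt_id t).const_mul (2 : ℝ)).smul_const a)).add
    (((hasDerivAt_pow 2 t).const_mul (3 : ℝ)).smul_const b)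
  rw [deriv_cubicCurve]
  exact (this.congr_deriv (by simp; module)).deriv

lemma norm_cubicCurve_le {t : ℝ} (ht : 0 ≤ t) :
    ‖cubicCurve x v a b t‖ ≤ ‖x‖ + t * ‖v‖ + t ^ 2 * ‖a‖ + t ^ 3 * ‖b‖ := by
  calc ‖cubicCurve x v a b t‖ ≤ ‖x‖ + ‖t • v‖ + ‖t ^ 2 • a‖ + ‖t ^ 3 • b‖ := norm_add₄_le
    _ = ‖x‖ + t * ‖v‖ + t ^ 2 * ‖a‖ + t ^ 3 * ‖b‖ := by
      simp only [norm_smul, Real.norm_of_nonneg, ht, pow_nonneg]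

lemma norm_sq_cubicCurve_le {t h : ℝ} (ht : 0 ≤ t) (hth : t ≤ h) :
    ‖cubicCurve x v a b t‖ ^ 2 ≤
      4 * (‖x‖ ^ 2 + h ^ 2 * ‖v‖ ^ 2 + h ^ 4 * ‖a‖ ^ 2 + h ^ 6 * ‖b‖ ^ 2) := by
  calc ‖cubicCurve x v a b t‖ ^ 2 ≤ (‖x‖ + t * ‖v‖ + t ^ 2 * ‖a‖ + t ^ 3 * ‖b‖) ^ 2 :=
        pow_le_pow_left₀ (norm_nonneg _) (norm_cubicCurve_le x v a b ht) 2
    _ ≤ 4 * (‖x‖ ^ 2 + t ^ 2 * ‖v‖ ^ 2 + t ^ 4 * ‖a‖ ^ 2 + t ^ 6 * ‖b‖ ^ 2) := by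
      convert add_sq_le_four_mul _ _ _ _ using 2; ring
    _ ≤ _ := by gcongr

lemma norm_sq_accel_add_le {G : E → E} {C₀ : ℝ} (hG : ∀ y, ‖G y‖ ≤ C₀ * ‖y‖)
    {t h : ℝ} (ht : 0 ≤ t) (hth : t ≤ h) :
    ‖(2 : ℝ) • a + (6 * t) • b + G (cubicCurve x v a b t)‖ ^ 2 ≤
      12 * ‖a‖ ^ 2 + 108 * h ^ 2 * ‖b‖ ^ 2 +
        12 * C₀ ^ 2 * (‖x‖ ^ 2 + h ^ 2 * ‖v‖ ^ 2 + h ^ 4 * ‖a‖ ^ 2 + h ^ 6 * ‖b‖ ^ 2) := by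
  set ξt := cubicCurve x v a b t
  have hGsq : ‖G ξt‖ ^ 2 ≤ C₀ ^ 2 * ‖ξt‖ ^ 2 := by
    rw [← mul_pow]; exact pow_le_pow_left₀ (norm_nonneg _) (hG ξt) 2
  have hξsq := norm_sq_cubicCurve_le x v a b ht hth
  have ht2 : t ^ 2 ≤ h ^ 2 := pow_le_pow_left₀ ht hth 2
  calc ‖(2 : ℝ) • a + (6 * t) • b + G ξt‖ ^ 2
      ≤ (2 * ‖a‖ + 6 * t * ‖b‖ + ‖G ξt‖) ^ 2 := by
        refine pow_le_pow_left₀ (norm_nonneg _) (norm_add₃_le.trans_eq ?_) 2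
        rw [norm_smul, norm_smul, Real.norm_two, Real.norm_of_nonneg (by positivity)]
    _ ≤ 3 * (4 * ‖a‖ ^ 2 + 36 * t ^ 2 * ‖b‖ ^ 2 + ‖G ξt‖ ^ 2) := by
      convert add_sq_le_three_mul _ _ _ using 2; ring
    _ ≤ _ := by nlinarith [sq_nonneg C₀, sq_nonneg ‖b‖]

variable {h : ℝ} (x' v' : E)

lemma cubicCurve_hermite (hh : h ≠ 0) :
    cubicCurve x v (hermiteCoeff₂ h x v x' v') (hermiteCoeff₃ h x v x' v') h = x' := by
  simp only [cubicCurve, hermiteCoeff₂, hermiteCoeff₃]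
  match_scalars <;> field_simp <;> ring

lemma deriv_cubicCurve_hermite (hh : h ≠ 0) :
    deriv (cubicCurve x v (hermiteCoeff₂ h x v x' v') (hermiteCoeff₃ h x v x' v')) h = v' := by
  simp only [deriv_cubicCurve, hermiteCoeff₂, hermiteCoeff₃]
  match_scalars <;> field_simp <;> ring

end Cubic

lemma cKram_le_of_curve {dt : ℕ} (g : Euc dt → ℝ) {h : ℝ} (hh : 0 ≤ h) {x v x' v' : Euc dt}
    {ξ : ℝ → Euc dt} (hξ : ContDiff ℝ 2 ξ) (h₀ : ξ 0 = x) (h₀' : deriv ξ 0 = v)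
    (h₁ : ξ h = x') (h₁' : deriv ξ h = v') :
    cKram g h ((x, v), (x', v')) ≤
      h * ∫ t in (0:ℝ)..h, ‖deriv (deriv ξ) t + gradient g (ξ t)‖ ^ 2 := by
  refine mul_le_mul_of_nonneg_left (csInf_le ⟨0, ?_⟩ ⟨ξ, hξ, h₀, h₀', h₁, h₁', rfl⟩) hh
  rintro s ⟨ζ, -, -, -, -, -, rfl⟩
  exact intervalIntegral.integral_nonneg hh fun t _ => by positivity

lemma intervalIntegral_le_of_le_const {f : ℝ → ℝ} {h B : ℝ} (hh : 0 ≤ h)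
    (hf : ∀ t ∈ Set.Icc 0 h, |f t| ≤ B) : ∫ t in (0:ℝ)..h, f t ≤ h * B := by
  have := intervalIntegral.norm_integral_le_of_norm_le_const (a := 0) (b := h) (f := f)
    fun t ht => hf t (Set.Ioc_subset_Icc_self (by simpa [Set.uIoc_of_le hh] using ht))
  rw [sub_zero, abs_of_nonneg hh, mul_comm] at this
  exact (le_abs_self _).trans this

lemma cKram_le_hermite {dt : ℕ} {g : Euc dt → ℝ} {C₀ : ℝ}
    (hgrad : ∀ y : Euc dt, ‖gradient g y‖ ≤ C₀ * ‖y‖) {h : ℝ} (hh : 0 < h) (x v x' v' : Euc dt) :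
    cKram g h ((x, v), (x', v')) ≤ h ^ 2 *
      (12 * ‖hermiteCoeff₂ h x v x' v'‖ ^ 2 + 108 * h ^ 2 * ‖hermiteCoeff₃ h x v x' v'‖ ^ 2 +
        12 * C₀ ^ 2 * (‖x‖ ^ 2 + h ^ 2 * ‖v‖ ^ 2 + h ^ 4 * ‖hermiteCoeff₂ h x v x' v'‖ ^ 2 +
          h ^ 6 * ‖hermiteCoeff₃ h x v x' v'‖ ^ 2)) := by
  set a := hermiteCoeff₂ h x v x' v'
  set b := hermiteCoeff₃ h x v x' v'
  have hcost := cKram_le_of_curve g hh.le (contDiff_cubicCurve x v a b)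
    (cubicCurve_zero x v a b) (deriv_cubicCurve_zero x v a b)
    (cubicCurve_hermite x v x' v' hh.ne') (deriv_cubicCurve_hermite x v x' v' hh.ne')
  have hint := intervalIntegral_le_of_le_const (f := fun t =>
      ‖deriv (deriv (cubicCurve x v a b)) t + gradient g (cubicCurve x v a b t)‖ ^ 2) hh.le
    fun t ⟨ht, hth⟩ => by
      rw [abs_of_nonneg (by positivity), deriv_deriv_cubicCurve]
      exact norm_sq_accel_add_le x v a b hgrad ht hth
  exact hcost.trans ((mul_le_mul_of_nonneg_left hint hh.le).trans_eq (by ring))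

lemma hermite_bound_le (C₀ p q X V h : ℝ) :
    h ^ 2 * (12 * p ^ 2 + 108 * h ^ 2 * q ^ 2 +
        12 * C₀ ^ 2 * (X ^ 2 + h ^ 2 * V ^ 2 + h ^ 4 * p ^ 2 + h ^ 6 * q ^ 2)) ≤
      (108 + 12 * C₀ ^ 2) * (h ^ 2 * p ^ 2 + h ^ 4 * q ^ 2 +
        h ^ 2 * (X ^ 2 + h ^ 2 * V ^ 2 + h ^ 4 * p ^ 2 + h ^ 6 * q ^ 2)) := by
  rw [← sub_nonneg]
  have : (108 + 12 * C₀ ^ 2) * (h ^ 2 * p ^ 2 + h ^ 4 * q ^ 2 +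
        h ^ 2 * (X ^ 2 + h ^ 2 * V ^ 2 + h ^ 4 * p ^ 2 + h ^ 6 * q ^ 2)) -
      h ^ 2 * (12 * p ^ 2 + 108 * h ^ 2 * q ^ 2 +
        12 * C₀ ^ 2 * (X ^ 2 + h ^ 2 * V ^ 2 + h ^ 4 * p ^ 2 + h ^ 6 * q ^ 2)) =
      (96 + 12 * C₀ ^ 2) * h ^ 2 * p ^ 2 + 12 * C₀ ^ 2 * h ^ 4 * q ^ 2 +
        108 * h ^ 2 * (X ^ 2 + h ^ 2 * V ^ 2 + h ^ 4 * p ^ 2 + h ^ 6 * q ^ 2) := by ring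
  rw [this]
  positivity

theorem statement_19_general
    (dt : ℕ) (g : Euc dt → ℝ) (C₀ : ℝ)
    (hgrad : ∀ x : Euc dt, ‖gradient g x‖ ≤ C₀ * ‖x‖) :
    ∃ C > (0:ℝ), ∀ h : ℝ, 0 < h → h ≤ 1 → ∀ x v x' v' : Euc dt,
      cKram g h ((x, v), (x', v')) ≤
        C * (h ^ 2 * ‖(3 / h ^ 2) • (x' - x - h • v) - (1 / h) • (v' - v)‖ ^ 2
          + h ^ 4 * ‖(1 / h ^ 2) • (v' + v) - (2 / h ^ 3) • (x' - x)‖ ^ 2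
          + h ^ 2 * (‖x‖ ^ 2 + h ^ 2 * ‖v‖ ^ 2
            + h ^ 4 * ‖(3 / h ^ 2) • (x' - x - h • v) - (1 / h) • (v' - v)‖ ^ 2
            + h ^ 6 * ‖(1 / h ^ 2) • (v' + v) - (2 / h ^ 3) • (x' - x)‖ ^ 2)) :=
  ⟨108 + 12 * C₀ ^ 2, by positivity, fun h hh _ x v x' v' =>
    (cKram_le_hermite hgrad hh x v x' v').trans (hermite_bound_le _ _ _ _ _ _)⟩

/-- Proof of Proposition 3.3: upper bound for the variational Kramers cost
by testing with the interpolating cubic. -/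
theorem statement_19
    (dt : ℕ) (g : Euc dt → ℝ) (C₀ : ℝ) (hC₀ : 0 < C₀)
    (hg : ContDiff ℝ 1 g) (hgrad : ∀ x : Euc dt, ‖gradient g x‖ ≤ C₀ * ‖x‖) :
    ∃ C > (0:ℝ), ∀ h : ℝ, 0 < h → h ≤ 1 → ∀ x v x' v' : Euc dt,
      cKram g h ((x, v), (x', v')) ≤
        C * (h ^ 2 * ‖(3 / h ^ 2) • (x' - x - h • v) - (1 / h) • (v' - v)‖ ^ 2
          + h ^ 4 * ‖(1 / h ^ 2) • (v' + v) - (2 / h ^ 3) • (x' - x)‖ ^ 2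
          + h ^ 2 * (‖x‖ ^ 2 + h ^ 2 * ‖v‖ ^ 2
            + h ^ 4 * ‖(3 / h ^ 2) • (x' - x - h • v) - (1 / h) • (v' - v)‖ ^ 2
            + h ^ 6 * ‖(1 / h ^ 2) • (v' + v) - (2 / h ^ 3) • (x' - x)‖ ^ 2)) :=
  statement_19_general dt g C₀ hgrad
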